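/- arXiv:1108.5409 — 3 statements merged into one kernel-verified Lean document; each statement's English description precedes it below -/
import Mathlib

section
/- For every real μ ≥ 0 and all real numbers v₀, v₁, v₂, the following identity holds: ((3/2)·v₂ − 2·v₁ + (1/2)·v₀)·v₂ + (μ/2)·v₂² = (1/2)·( |(v₁,v₂)|²_{G(μ)} − (1/(1+μ))·|(v₀,v₁)|²_{G(μ)} ) + ((1+μ)·v₂ − 2·v₁ + v₀)² / (4(1+μ)). -/
/-- The generalized G-quadratic form on ℝ²: the quadratic form of the symmetric
matrix `G(μ)` with rows `(1/2, −1)` and `(−1, 5/2 + μ/2)`. -/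
noncomputable def Gq (μ a b : ℝ) : ℝ := (1/2) * a^2 - 2 * a * b + (5/2 + μ/2) * b^2

theorem G_stability_identity_of_one_add_ne_zero {μ : ℝ} (hμ : 1 + μ ≠ 0) (v₀ v₁ v₂ : ℝ) :
    ((3/2) * v₂ - 2 * v₁ + (1/2) * v₀) * v₂ + (μ/2) * v₂^2 =
      (1/2) * (Gq μ v₁ v₂ - (1/(1+μ)) * Gq μ v₀ v₁)
        + ((1+μ) * v₂ - 2 * v₁ + v₀)^2 / (4*(1+μ)) := by
  unfold Gq
  field_simp
  ring

/-- The generalized G-stability identity for the 2nd order BDF method (Hill–Süli). -/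
theorem G_stability_identity (μ : ℝ) (hμ : 0 ≤ μ) (v₀ v₁ v₂ : ℝ) :
    ((3/2) * v₂ - 2 * v₁ + (1/2) * v₀) * v₂ + (μ/2) * v₂^2 =
      (1/2) * (Gq μ v₁ v₂ - (1/(1+μ)) * Gq μ v₀ v₁)
        + ((1+μ) * v₂ - 2 * v₁ + v₀)^2 / (4*(1+μ)) :=
  G_stability_identity_of_one_add_ne_zero (by positivity) v₀ v₁ v₂
end

section
/- There exists a constant C_w ≥ 1 such that for all p, q : ℤ² → ℂ with p(0) = q(0) = 0, p(−κ) = conj(p(κ)) and q(−κ) = conj(q(κ)) for all κ, and with ‖p‖_{H¹} < ∞ and ‖q‖_{H¹} < ∞, one has (Σ_{κ≠0} |κ|^{−2} |J(p,q)(κ)|²)^{1/2} ≤ C_w · ‖p‖_{H¹} · ‖q‖_{H¹}. (This is the Wente estimate ‖∇⊥ψ·∇φ‖_{H^{−1}} ≤ C_w‖ψ‖_{H¹}‖φ‖_{H¹} for mean-zero periodic fields.) -/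
/-! Mean-zero real periodic fields on the torus `(0,2π)²` are identified with
their Fourier coefficient sequences `a : ℤ² → ℂ` with `a 0 = 0` and
`a (−κ) = conj (a κ)`. -/

/-- `|κ|² = κ₁² + κ₂²` as a real number. -/
noncomputable def kSq (κ : ℤ × ℤ) : ℝ := ((κ.1^2 + κ.2^2 : ℤ) : ℝ)

/-- The `κ`-th term `|κ|^{2s}·|a(κ)|²` of the squared Sobolev norm `‖a‖²_{H^s}`
(the term at `κ = 0` is zero). -/
noncomputable def sobTerm (s : ℝ) (a : ℤ × ℤ → ℂ) (κ : ℤ × ℤ) : ℝ :=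
  if κ = 0 then 0 else kSq κ ^ s * ‖a κ‖ ^ 2

/-- Finiteness of the Sobolev norm `‖a‖_{H^s}` (i.e. `‖a‖_{H^s} < ∞`). -/
def SobSummable (s : ℝ) (a : ℤ × ℤ → ℂ) : Prop := Summable (sobTerm s a)

/-- The squared Sobolev norm `‖a‖²_{H^s} = Σ_{κ≠0} |κ|^{2s}|a(κ)|²`. -/
noncomputable def sobNormSq (s : ℝ) (a : ℤ × ℤ → ℂ) : ℝ := ∑' κ : ℤ × ℤ, sobTerm s a κ

/-- The Sobolev norm `‖a‖_{H^s}`; `s = 0` is the L² norm `‖a‖`, `s = 1` is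
`‖∇a‖`, and `s = 2` is `‖Δa‖`. -/
noncomputable def sobNorm (s : ℝ) (a : ℤ × ℤ → ℂ) : ℝ := Real.sqrt (sobNormSq s a)

/-- The coefficient sequence of a mean-zero real periodic field. -/
def MeanZeroField (a : ℤ × ℤ → ℂ) : Prop :=
  a 0 = 0 ∧ ∀ κ : ℤ × ℤ, a (-κ) = starRingEnd ℂ (a κ)

/-- Fourier coefficients of the advection term `∇⊥ψ·∇φ`, with `ψ̂ = p`, `φ̂ = q`:
`J(p,q)(κ) = −Σ_m (m₁κ₂ − m₂κ₁)·p(m)·q(κ−m)`. -/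
noncomputable def Jconv (p q : ℤ × ℤ → ℂ) (κ : ℤ × ℤ) : ℂ :=
  - ∑' m : ℤ × ℤ, ((m.1 * κ.2 - m.2 * κ.1 : ℤ) : ℂ) * p m * q (κ - m)


/-! The symbol obeys `|m × κ| ≤ |κ| · min (|m|, |κ - m|)`, so `|J(p,q)(κ)| / |κ|` is bounded by
two paraproducts of `|p|` and `|q|`, in each of which the lower of the two frequencies carries
the weight. By Cauchy–Schwarz the square of a paraproduct at `κ` is at most `‖p‖²_{H¹}` times the
sum of `|q(κ - m)|²` over the lower frequencies `m`. Summing over `κ`, a frequency `n` of `q` is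
counted once for each nonzero lattice point in the disc of radius `|n|`, of which there are at
most `9|n|²`; this gives back `‖q‖²_{H¹}`. No cancellation in `J` is used. -/

open scoped ENNReal NNReal

theorem ENNReal.tsum_mul_sq_le {ι : Type*} (f g : ι → ℝ≥0∞) :
    (∑' i, f i * g i) ^ 2 ≤ (∑' i, f i ^ 2) * ∑' i, g i ^ 2 := by
  have holder : ∑' i, f i * g i ≤ (∑' i, f i ^ 2) ^ (1 / 2 : ℝ) * (∑' i, g i ^ 2) ^ (1 / 2 : ℝ) :=
    ENNReal.summable.tsum_le_of_sum_le fun s => by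
      have h := ENNReal.inner_le_Lp_mul_Lq s f g Real.HolderConjugate.two_two
      simp only [ENNReal.rpow_two] at h
      refine h.trans ?_
      gcongr <;> exact ENNReal.sum_le_tsum s
  calc (∑' i, f i * g i) ^ 2
      ≤ ((∑' i, f i ^ 2) ^ (1 / 2 : ℝ) * (∑' i, g i ^ 2) ^ (1 / 2 : ℝ)) ^ 2 := by gcongr
    _ = (∑' i, f i ^ 2) * ∑' i, g i ^ 2 := by
      simp only [mul_pow, ← ENNReal.rpow_natCast, ← ENNReal.rpow_mul]
      norm_num

theorem ENNReal.add_sq_le_two_mul (a b : ℝ≥0∞) : (a + b) ^ 2 ≤ 2 * (a ^ 2 + b ^ 2) := by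
  have h := ENNReal.rpow_add_le_mul_rpow_add_rpow a b one_le_two
  norm_num [ENNReal.rpow_two] at h
  exact h

lemma kSq_nonneg (m : ℤ × ℤ) : 0 ≤ kSq m := by
  unfold kSq
  positivity

lemma kSq_pos_iff {m : ℤ × ℤ} : 0 < kSq m ↔ m ≠ 0 := by
  refine ⟨fun h hm => by simp [hm, kSq] at h, fun hm => ?_⟩
  have : m.1 ≠ 0 ∨ m.2 ≠ 0 := by
    by_contra! h
    exact hm (Prod.ext h.1 h.2)
  unfold kSq
  rcases this with h | h <;> positivity

lemma one_le_kSq_of_pos {m : ℤ × ℤ} (hm : 0 < kSq m) : 1 ≤ kSq m := by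
  unfold kSq at *
  exact_mod_cast (Int.cast_pos.mp hm : (0 : ℤ) < _)

noncomputable def kAbs (m : ℤ × ℤ) : ℝ≥0 := NNReal.sqrt (kSq m).toNNReal

lemma coe_kAbs (m : ℤ × ℤ) : (kAbs m : ℝ) = √(kSq m) := by
  rw [kAbs, Real.coe_sqrt, Real.coe_toNNReal _ (kSq_nonneg m)]

lemma coe_kAbs_sq (m : ℤ × ℤ) : ((kAbs m : ℝ≥0∞)) ^ 2 = ENNReal.ofReal (kSq m) := by
  rw [← ENNReal.coe_pow, kAbs, NNReal.sq_sqrt]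
  rfl

lemma kAbs_eq_zero_of_kSq_nonpos {m : ℤ × ℤ} (hm : kSq m ≤ 0) : kAbs m = 0 := by
  simp [kAbs, Real.toNNReal_eq_zero.mpr hm]

def cross (m κ : ℤ × ℤ) : ℤ := m.1 * κ.2 - m.2 * κ.1

lemma cross_sub_left (m κ : ℤ × ℤ) : cross (κ - m) κ = -cross m κ := by
  simp only [cross, Prod.fst_sub, Prod.snd_sub]
  ring

lemma enorm_cross_le (m κ : ℤ × ℤ) : ‖(cross m κ : ℂ)‖ₑ ≤ kAbs m * kAbs κ := by
  have lagrange : ((cross m κ : ℤ) : ℝ) ^ 2 ≤ kSq m * kSq κ := by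
    simp only [cross, kSq]
    push_cast
    nlinarith [sq_nonneg ((m.1 : ℝ) * κ.1 + m.2 * κ.2)]
  have h : |((cross m κ : ℤ) : ℝ)| ≤ kAbs m * kAbs κ := by
    rw [coe_kAbs, coe_kAbs, ← Real.sqrt_mul (kSq_nonneg m), ← Real.sqrt_sq_eq_abs]
    exact Real.sqrt_le_sqrt lagrange
  rw [← ofReal_norm, Complex.norm_intCast, ← ENNReal.coe_mul, ← ENNReal.ofReal_coe_nnreal]
  exact ENNReal.ofReal_le_ofReal (by exact_mod_cast h)

lemma enorm_cross_le_min (m κ : ℤ × ℤ) :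
    ‖(cross m κ : ℂ)‖ₑ ≤ kAbs κ * min (kAbs m) (kAbs (κ - m)) := by
  have h := enorm_cross_le (κ - m) κ
  rw [cross_sub_left, Int.cast_neg, enorm_neg] at h
  rw [mul_comm, ENNReal.coe_min, ← min_mul_mul_right]
  exact le_min (enorm_cross_le m κ) h

noncomputable def latticeCount (r : ℝ) : ℝ≥0∞ :=
  ∑' m : ℤ × ℤ, if kSq m ∈ Set.Ioc 0 r then 1 else 0

lemma mem_Icc_floor_sqrt_of_kSq_le {m : ℤ × ℤ} {r : ℝ} (h : kSq m ≤ r) :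
    m ∈ Finset.Icc (-(⌊√r⌋₊ : ℤ), -(⌊√r⌋₊ : ℤ)) ((⌊√r⌋₊ : ℤ), (⌊√r⌋₊ : ℤ)) := by
  have hcoord : ∀ x : ℤ, (x : ℝ) ^ 2 ≤ r → -(⌊√r⌋₊ : ℤ) ≤ x ∧ x ≤ ⌊√r⌋₊ := by
    intro x hx
    have : x.natAbs ≤ ⌊√r⌋₊ :=
      Nat.le_floor (by rw [Nat.cast_natAbs, Int.cast_abs]; exact Real.abs_le_sqrt hx)
    omega
  have hkSq : kSq m = (m.1 : ℝ) ^ 2 + (m.2 : ℝ) ^ 2 := by simp [kSq]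
  obtain ⟨h1, h1'⟩ := hcoord m.1 (by nlinarith [sq_nonneg (m.2 : ℝ)])
  obtain ⟨h2, h2'⟩ := hcoord m.2 (by nlinarith [sq_nonneg (m.1 : ℝ)])
  simp only [Finset.mem_Icc, Prod.le_def]
  exact ⟨⟨h1, h2⟩, h1', h2'⟩

lemma latticeCount_le (r : ℝ) : latticeCount r ≤ 9 * ENNReal.ofReal r := by
  rcases lt_or_ge r 1 with hr | hr
  · have hempty : ∀ m : ℤ × ℤ, (if kSq m ∈ Set.Ioc 0 r then (1 : ℝ≥0∞) else 0) = 0 :=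
      fun m => if_neg fun h => (h.2.trans_lt hr).not_ge (one_le_kSq_of_pos h.1)
    rw [latticeCount, tsum_congr hempty, tsum_zero]
    exact zero_le
  set s := ⌊√r⌋₊
  have hs1 : 1 ≤ s := Nat.le_floor (by simpa using Real.one_le_sqrt.mpr hr)
  have hs_sq : (s : ℝ) ^ 2 ≤ r := by
    calc (s : ℝ) ^ 2 ≤ √r ^ 2 := by gcongr; exact Nat.floor_le (Real.sqrt_nonneg r)
      _ = r := Real.sq_sqrt (by linarith)
  set box := Finset.Icc (-(s : ℤ), -(s : ℤ)) ((s : ℤ), (s : ℤ))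
  have hbox : ∀ m ∉ box, (if kSq m ∈ Set.Ioc 0 r then (1 : ℝ≥0∞) else 0) = 0 :=
    fun m hm => if_neg fun h => hm (mem_Icc_floor_sqrt_of_kSq_le h.2)
  have hcard : (box.card : ℝ) = (2 * s + 1) ^ 2 := by
    simp only [box, Finset.card_Icc_prod, Int.card_Icc]
    rw [show ((s : ℤ) + 1 - -(s : ℤ)).toNat = 2 * s + 1 by omega]
    push_cast
    ring
  calc latticeCount r = ∑ m ∈ box, if kSq m ∈ Set.Ioc 0 r then (1 : ℝ≥0∞) else 0 :=
        tsum_eq_sum hbox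
    _ ≤ ∑ _m ∈ box, (1 : ℝ≥0∞) := Finset.sum_le_sum fun m _ => by split_ifs <;> simp
    _ = ENNReal.ofReal (box.card : ℝ) := by simp
    _ ≤ ENNReal.ofReal (9 * r) := by
      refine ENNReal.ofReal_le_ofReal ?_
      have : (1 : ℝ) ≤ s := by exact_mod_cast hs1
      rw [hcard]
      nlinarith
    _ = 9 * ENNReal.ofReal r := by rw [ENNReal.ofReal_mul (by norm_num)]; norm_num

noncomputable def h1Energy (f : ℤ × ℤ → ℝ≥0∞) : ℝ≥0∞ := ∑' m, (kAbs m * f m) ^ 2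

/-- The origin, of weight `kAbs 0 = 0`, is left out so that `latticeCount` never counts it. -/
noncomputable def paraprod (f g : ℤ × ℤ → ℝ≥0∞) (κ : ℤ × ℤ) : ℝ≥0∞ :=
  ∑' m, if kSq m ∈ Set.Ioc 0 (kSq (κ - m)) then kAbs m * f m * g (κ - m) else 0

section Paraproduct

variable (f g : ℤ × ℤ → ℝ≥0∞)

lemma tsum_min_mul_le_paraprod_add (κ : ℤ × ℤ) :
    ∑' m, (min (kAbs m) (kAbs (κ - m)) : ℝ≥0∞) * f m * g (κ - m)
      ≤ paraprod f g κ + paraprod g f κ := by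
  have hswap : paraprod g f κ = ∑' m, if kSq (κ - m) ∈ Set.Ioc 0 (kSq m)
      then kAbs (κ - m) * g (κ - m) * f m else 0 := by
    rw [paraprod, ← (Equiv.subLeft κ).tsum_eq]
    simp only [Equiv.subLeft_apply, sub_sub_cancel]
  rw [hswap, paraprod, ← ENNReal.tsum_add]
  refine ENNReal.tsum_le_tsum fun m => ?_
  by_cases hlow : kSq m ∈ Set.Ioc 0 (kSq (κ - m))
  · rw [if_pos hlow]
    calc (min (kAbs m) (kAbs (κ - m)) : ℝ≥0∞) * f m * g (κ - m)
        ≤ kAbs m * f m * g (κ - m) := by gcongr; exact min_le_left _ _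
      _ ≤ _ := le_self_add
  by_cases hhigh : kSq (κ - m) ∈ Set.Ioc 0 (kSq m)
  · rw [if_pos hhigh]
    calc (min (kAbs m) (kAbs (κ - m)) : ℝ≥0∞) * f m * g (κ - m)
        ≤ kAbs (κ - m) * f m * g (κ - m) := by gcongr; exact min_le_right _ _
      _ = kAbs (κ - m) * g (κ - m) * f m := by ring
      _ ≤ _ := le_add_self
  have hzero : kSq m ≤ 0 ∨ kSq (κ - m) ≤ 0 := by
    simp only [Set.mem_Ioc, not_and_or, not_lt, not_le] at hlow hhigh
    by_contra! h
    rcases hlow with hlow | hlow <;> rcases hhigh with hhigh | hhigh <;> linarith [h.1, h.2]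
  rcases hzero with h | h <;> simp [kAbs_eq_zero_of_kSq_nonpos h]

lemma paraprod_sq_le (κ : ℤ × ℤ) :
    paraprod f g κ ^ 2
      ≤ h1Energy f * ∑' m, if kSq m ∈ Set.Ioc 0 (kSq (κ - m)) then g (κ - m) ^ 2 else 0 := by
  have hsplit : paraprod f g κ = ∑' m, (kAbs m * f m) *
      (if kSq m ∈ Set.Ioc 0 (kSq (κ - m)) then g (κ - m) else 0) :=
    tsum_congr fun m => by split_ifs <;> simp [mul_assoc]
  rw [hsplit]
  refine (ENNReal.tsum_mul_sq_le _ _).trans_eq ?_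
  rw [h1Energy]
  congr 1
  exact tsum_congr fun m => by split_ifs <;> simp

lemma tsum_tsum_lowerFreq_sq_le :
    ∑' κ, ∑' m, (if kSq m ∈ Set.Ioc 0 (kSq (κ - m)) then g (κ - m) ^ 2 else 0)
      ≤ 9 * h1Energy g := by
  calc ∑' κ, ∑' m, (if kSq m ∈ Set.Ioc 0 (kSq (κ - m)) then g (κ - m) ^ 2 else 0)
      = ∑' m, ∑' n, (if kSq m ∈ Set.Ioc 0 (kSq n) then g n ^ 2 else 0) := by
        rw [ENNReal.tsum_comm]
        exact tsum_congr fun m => (Equiv.subRight m).tsum_eq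
          fun n => if kSq m ∈ Set.Ioc 0 (kSq n) then g n ^ 2 else 0
    _ = ∑' n, g n ^ 2 * latticeCount (kSq n) := by
        rw [ENNReal.tsum_comm]
        refine tsum_congr fun n => ?_
        rw [latticeCount, ← ENNReal.tsum_mul_left]
        exact tsum_congr fun m => by split_ifs <;> simp
    _ ≤ ∑' n, g n ^ 2 * (9 * ENNReal.ofReal (kSq n)) := by
        gcongr with n
        exact latticeCount_le _
    _ = 9 * h1Energy g := by
        rw [h1Energy, ← ENNReal.tsum_mul_left]
        refine tsum_congr fun n => ?_
        rw [mul_pow, coe_kAbs_sq]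
        ring

lemma tsum_paraprod_sq_le : ∑' κ, paraprod f g κ ^ 2 ≤ 9 * h1Energy f * h1Energy g := by
  calc ∑' κ, paraprod f g κ ^ 2
      ≤ ∑' κ, h1Energy f *
          ∑' m, (if kSq m ∈ Set.Ioc 0 (kSq (κ - m)) then g (κ - m) ^ 2 else 0) :=
        ENNReal.tsum_le_tsum (paraprod_sq_le f g)
    _ ≤ h1Energy f * (9 * h1Energy g) := by
        rw [ENNReal.tsum_mul_left]
        gcongr
        exact tsum_tsum_lowerFreq_sq_le g
    _ = 9 * h1Energy f * h1Energy g := by ring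

end Paraproduct

lemma enorm_Jconv_le (p q : ℤ × ℤ → ℂ) (κ : ℤ × ℤ) :
    ‖Jconv p q κ‖ₑ ≤ kAbs κ * (paraprod (‖p ·‖ₑ) (‖q ·‖ₑ) κ + paraprod (‖q ·‖ₑ) (‖p ·‖ₑ) κ) := by
  calc ‖Jconv p q κ‖ₑ = ‖∑' m, (cross m κ : ℂ) * p m * q (κ - m)‖ₑ := by
        rw [Jconv, enorm_neg]
        rfl
    _ ≤ ∑' m, ‖(cross m κ : ℂ) * p m * q (κ - m)‖ₑ := enorm_tsum_le_tsum_enorm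
    _ ≤ ∑' m, kAbs κ * ((min (kAbs m) (kAbs (κ - m)) : ℝ≥0∞) * ‖p m‖ₑ * ‖q (κ - m)‖ₑ) :=
        ENNReal.tsum_le_tsum fun m => by
          rw [enorm_mul, enorm_mul, ← mul_assoc, ← mul_assoc]
          gcongr
          exact enorm_cross_le_min m κ
    _ ≤ _ := by
        rw [ENNReal.tsum_mul_left]
        gcongr
        exact tsum_min_mul_le_paraprod_add _ _ κ

lemma sobTerm_nonneg (s : ℝ) (a : ℤ × ℤ → ℂ) (κ : ℤ × ℤ) : 0 ≤ sobTerm s a κ := by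
  unfold sobTerm
  split_ifs
  · exact le_rfl
  · exact mul_nonneg (Real.rpow_nonneg (kSq_nonneg κ) s) (sq_nonneg _)

lemma sobNormSq_nonneg (s : ℝ) (a : ℤ × ℤ → ℂ) : 0 ≤ sobNormSq s a :=
  tsum_nonneg (sobTerm_nonneg s a)

lemma sobSummable_and_sobNormSq_le {s : ℝ} {a : ℤ × ℤ → ℂ} {B : ℝ} (hB : 0 ≤ B)
    (h : ∑' κ, ENNReal.ofReal (sobTerm s a κ) ≤ ENNReal.ofReal B) :
    SobSummable s a ∧ sobNormSq s a ≤ B := by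
  have hsum : SobSummable s a := by
    have := ENNReal.summable_toReal (ne_top_of_le_ne_top ENNReal.ofReal_ne_top h)
    simp only [ENNReal.toReal_ofReal (sobTerm_nonneg s a _)] at this
    exact this
  refine ⟨hsum, ?_⟩
  rwa [← ENNReal.ofReal_le_ofReal_iff hB, sobNormSq,
    ENNReal.ofReal_tsum_of_nonneg (sobTerm_nonneg s a) hsum]

lemma ofReal_sobTerm_one (a : ℤ × ℤ → ℂ) (m : ℤ × ℤ) :
    ENNReal.ofReal (sobTerm 1 a m) = (kAbs m * ‖a m‖ₑ) ^ 2 := by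
  by_cases hm : m = 0
  · simp [sobTerm, hm, kAbs, kSq]
  rw [sobTerm, if_neg hm, Real.rpow_one, ENNReal.ofReal_mul (kSq_nonneg m), ← coe_kAbs_sq,
    ENNReal.ofReal_pow (norm_nonneg _), ofReal_norm, mul_pow]

lemma h1Energy_enorm_eq {a : ℤ × ℤ → ℂ} (ha : SobSummable 1 a) :
    h1Energy (‖a ·‖ₑ) = ENNReal.ofReal (sobNormSq 1 a) := by
  rw [sobNormSq, ENNReal.ofReal_tsum_of_nonneg (sobTerm_nonneg 1 a) ha]
  exact tsum_congr fun m => (ofReal_sobTerm_one a m).symm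

lemma ofReal_sobTerm_neg_one_le {a : ℤ × ℤ → ℂ} {κ : ℤ × ℤ} {B : ℝ≥0∞}
    (h : ‖a κ‖ₑ ≤ kAbs κ * B) : ENNReal.ofReal (sobTerm (-1) a κ) ≤ B ^ 2 := by
  by_cases hκ : κ = 0
  · simp [sobTerm, hκ]
  have hpos : 0 < kSq κ := kSq_pos_iff.mpr hκ
  have hsq : ‖a κ‖ₑ ^ 2 ≤ ENNReal.ofReal (kSq κ) * B ^ 2 := by
    rw [← coe_kAbs_sq, ← mul_pow]
    gcongr
  rw [sobTerm, if_neg hκ, Real.rpow_neg_one, ENNReal.ofReal_mul (inv_nonneg.mpr hpos.le),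
    ENNReal.ofReal_inv_of_pos hpos, ENNReal.ofReal_pow (norm_nonneg _), ofReal_norm]
  calc (ENNReal.ofReal (kSq κ))⁻¹ * ‖a κ‖ₑ ^ 2
      ≤ (ENNReal.ofReal (kSq κ))⁻¹ * (ENNReal.ofReal (kSq κ) * B ^ 2) := by gcongr
    _ = B ^ 2 := by
        rw [← mul_assoc, ENNReal.inv_mul_cancel (ENNReal.ofReal_pos.mpr hpos).ne'
          ENNReal.ofReal_ne_top, one_mul]

lemma tsum_ofReal_sobTerm_Jconv_le (p q : ℤ × ℤ → ℂ) :
    ∑' κ, ENNReal.ofReal (sobTerm (-1) (Jconv p q) κ)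
      ≤ 36 * h1Energy (‖p ·‖ₑ) * h1Energy (‖q ·‖ₑ) := by
  set P : ℤ × ℤ → ℝ≥0∞ := (‖p ·‖ₑ)
  set Q : ℤ × ℤ → ℝ≥0∞ := (‖q ·‖ₑ)
  calc ∑' κ, ENNReal.ofReal (sobTerm (-1) (Jconv p q) κ)
      ≤ ∑' κ, (paraprod P Q κ + paraprod Q P κ) ^ 2 :=
        ENNReal.tsum_le_tsum fun κ => ofReal_sobTerm_neg_one_le (enorm_Jconv_le p q κ)
    _ ≤ ∑' κ, 2 * (paraprod P Q κ ^ 2 + paraprod Q P κ ^ 2) :=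
        ENNReal.tsum_le_tsum fun κ => ENNReal.add_sq_le_two_mul _ _
    _ = 2 * (∑' κ, paraprod P Q κ ^ 2 + ∑' κ, paraprod Q P κ ^ 2) := by
        rw [ENNReal.tsum_mul_left, ENNReal.tsum_add]
    _ ≤ 2 * (9 * h1Energy P * h1Energy Q + 9 * h1Energy Q * h1Energy P) := by
        gcongr <;> exact tsum_paraprod_sq_le _ _
    _ = 36 * h1Energy P * h1Energy Q := by ring

/-- Wente estimate `‖∇⊥ψ·∇φ‖_{H^{−1}} ≤ C_w·‖ψ‖_{H¹}·‖φ‖_{H¹}` for mean-zero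
periodic fields, in terms of Fourier coefficients. -/
theorem wente_Hm1_H1_H1 :
    ∃ Cw : ℝ, 1 ≤ Cw ∧
      ∀ p q : ℤ × ℤ → ℂ, MeanZeroField p → MeanZeroField q →
        SobSummable 1 p → SobSummable 1 q →
        SobSummable (-1) (Jconv p q) ∧
        sobNorm (-1) (Jconv p q) ≤ Cw * sobNorm 1 p * sobNorm 1 q := by
  refine ⟨6, by norm_num, fun p q _ _ hp hq => ?_⟩
  have hp0 := sobNormSq_nonneg 1 p
  have hq0 := sobNormSq_nonneg 1 q
  have hbound : ∑' κ, ENNReal.ofReal (sobTerm (-1) (Jconv p q) κ)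
      ≤ ENNReal.ofReal (6 ^ 2 * sobNormSq 1 p * sobNormSq 1 q) := by
    rw [ENNReal.ofReal_mul (by positivity), ENNReal.ofReal_mul (by positivity),
      ← h1Energy_enorm_eq hp, ← h1Energy_enorm_eq hq]
    convert tsum_ofReal_sobTerm_Jconv_le p q
    norm_num
  obtain ⟨hsum, hle⟩ := sobSummable_and_sobNormSq_le (by positivity) hbound
  refine ⟨hsum, (Real.sqrt_le_sqrt hle).trans_eq ?_⟩
  rw [Real.sqrt_mul (by positivity), Real.sqrt_mul (by positivity), Real.sqrt_sq (by norm_num)]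
  rfl
end

section
/- Let ν > 0, k > 0 with νk ≤ 1, let A > 0 and ρ₀ > 0, and let (gₙ)_{n≥0}, (dₙ)_{n≥1} be sequences of nonnegative real numbers satisfying, for every n ≥ 1, gₙ − gₙ₋₁/(1+νk) + (ν/2 − A·k·gₙ₋₁)·k·dₙ ≤ (ν/2)·k·ρ₀². Set M² := max{g₀, ρ₀²}. If 2·A·k·M² ≤ ν, then for every n ≥ 0: gₙ ≤ (1+νk)^{−n}·g₀ + ρ₀²·(1 − (1+νk)^{−n}) ≤ M². -/
/-!
Put `q = 1 + νk` and `M² = max g₀ ρ₀²`. As long as `gₙ ≤ M²`, the time-step restriction makes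
the coefficient `ν/2 - A k gₙ` of the dissipation term nonnegative, so the recursion reduces to the
linear one `gₙ₊₁ ≤ gₙ / q + (νk/2) ρ₀²`, and `νk/2 ≤ 1 - 1/q` because `νk ≤ 1`. The bound
`bₙ = q⁻ⁿ g₀ + ρ₀² (1 - q⁻ⁿ)` solves `bₙ₊₁ = bₙ / q + ρ₀² (1 - 1/q)` and is a convex combination
of `g₀` and `ρ₀²`, hence at most `M²`; so `gₙ ≤ bₙ` propagates by induction.
-/

lemma half_le_one_sub_inv_one_add {x : ℝ} (hx₀ : 0 ≤ x) (hx₁ : x ≤ 1) :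
    x / 2 ≤ 1 - (1 + x)⁻¹ := by
  rw [← sub_nonneg]
  have key : 1 - (1 + x)⁻¹ - x / 2 = x * (1 - x) / (2 * (1 + x)) := by
    field_simp
    ring
  rw [key]
  have : 0 ≤ 1 - x := by linarith
  positivity

section AffineBound

variable {q : ℝ}

lemma inv_pow_mul_add_mul_one_sub_le_max (hq : 1 ≤ q) (a c : ℝ) (n : ℕ) :
    (q ^ n)⁻¹ * a + c * (1 - (q ^ n)⁻¹) ≤ max a c := by
  have ht₀ : 0 ≤ (q ^ n)⁻¹ := by positivity
  have ht₁ : (q ^ n)⁻¹ ≤ 1 := inv_le_one_of_one_le₀ (one_le_pow₀ hq)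
  simpa only [smul_eq_mul, mul_comm c] using
    Convex.combo_le_max a c ht₀ (sub_nonneg.2 ht₁) (add_sub_cancel _ _)

lemma inv_pow_succ_mul_add_mul_one_sub (hq : q ≠ 0) (a c : ℝ) (n : ℕ) :
    (q ^ (n + 1))⁻¹ * a + c * (1 - (q ^ (n + 1))⁻¹)
      = ((q ^ n)⁻¹ * a + c * (1 - (q ^ n)⁻¹)) / q + c * (1 - q⁻¹) := by
  field_simp
  ring

lemma le_inv_pow_mul_add_mul_one_sub_of_step (hq : 1 ≤ q) {c : ℝ} {g : ℕ → ℝ}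
    (hstep : ∀ n, g n ≤ max (g 0) c → g (n + 1) ≤ g n / q + c * (1 - q⁻¹)) (n : ℕ) :
    g n ≤ (q ^ n)⁻¹ * g 0 + c * (1 - (q ^ n)⁻¹) := by
  induction n with
  | zero => simp
  | succ n ih =>
    have hq₀ : 0 < q := by linarith
    rw [inv_pow_succ_mul_add_mul_one_sub hq₀.ne']
    calc g (n + 1) ≤ g n / q + c * (1 - q⁻¹) :=
          hstep n (ih.trans (inv_pow_mul_add_mul_one_sub_le_max hq _ _ n))
      _ ≤ _ := by gcongr

end AffineBound

theorem inductive_uniform_bound_general (ν k A ρ₀ : ℝ)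
    (hν : 0 < ν) (hk : 0 < k) (hνk : ν * k ≤ 1) (hA : 0 < A)
    (g : ℕ → ℝ) (d : ℕ → ℝ) (hd : ∀ n, 1 ≤ n → 0 ≤ d n)
    (hrec : ∀ n, 1 ≤ n →
      g n - g (n-1) / (1+ν*k) + (ν/2 - A*k*(g (n-1))) * k * d n ≤ (ν/2)*k*ρ₀^2)
    (hstep : 2*A*k*(max (g 0) (ρ₀^2)) ≤ ν) :
    ∀ n : ℕ,
      g n ≤ ((1+ν*k)^n)⁻¹ * g 0 + ρ₀^2 * (1 - ((1+ν*k)^n)⁻¹) ∧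
      ((1+ν*k)^n)⁻¹ * g 0 + ρ₀^2 * (1 - ((1+ν*k)^n)⁻¹) ≤ max (g 0) (ρ₀^2) := by
  have hνk₀ : 0 ≤ ν * k := by positivity
  have hq : 1 ≤ 1 + ν * k := by linarith
  have hlinear : ∀ n, g n ≤ max (g 0) (ρ₀^2) →
      g (n + 1) ≤ g n / (1 + ν * k) + ρ₀^2 * (1 - (1 + ν * k)⁻¹) := by
    intro n hgn
    have hdissip : 0 ≤ (ν/2 - A*k*(g n)) * k * d (n + 1) := by
      have : A * k * g n ≤ A * k * max (g 0) (ρ₀^2) := by gcongr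
      have : 0 ≤ ν/2 - A*k*(g n) := by linarith
      have := hd (n + 1) n.succ_pos
      positivity
    have hrec' := hrec (n + 1) n.succ_pos
    rw [Nat.add_sub_cancel] at hrec'
    have := mul_le_mul_of_nonneg_left (half_le_one_sub_inv_one_add hνk₀ hνk) (sq_nonneg ρ₀)
    linarith
  exact fun n => ⟨le_inv_pow_mul_add_mul_one_sub_of_step hq hlinear n,
    inv_pow_mul_add_mul_one_sub_le_max hq _ _ n⟩

/-- The inductive lemma at the core of the uniform-in-time L² bound for the
BDF2–AB2 scheme: `g n` plays the role of the squared generalized G-norm of the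
solution pair, `d n` the squared H¹ norm of the new iterate, and
`2·A·k·M² ≤ ν` is the time-step restriction. -/
theorem inductive_uniform_bound (ν k A ρ₀ : ℝ)
    (hν : 0 < ν) (hk : 0 < k) (hνk : ν * k ≤ 1) (hA : 0 < A) (hρ₀ : 0 < ρ₀)
    (g : ℕ → ℝ) (d : ℕ → ℝ) (hg : ∀ n, 0 ≤ g n) (hd : ∀ n, 1 ≤ n → 0 ≤ d n)
    (hrec : ∀ n, 1 ≤ n →
      g n - g (n-1) / (1+ν*k) + (ν/2 - A*k*(g (n-1))) * k * d n ≤ (ν/2)*k*ρ₀^2)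
    (hstep : 2*A*k*(max (g 0) (ρ₀^2)) ≤ ν) :
    ∀ n : ℕ,
      g n ≤ ((1+ν*k)^n)⁻¹ * g 0 + ρ₀^2 * (1 - ((1+ν*k)^n)⁻¹) ∧
      ((1+ν*k)^n)⁻¹ * g 0 + ρ₀^2 * (1 - ((1+ν*k)^n)⁻¹) ≤ max (g 0) (ρ₀^2) :=
  inductive_uniform_bound_general ν k A ρ₀ hν hk hνk hA g d hd hrec hstep
end
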